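/- There exist constants c, C > 0 such that for every n ≥ 3, the modified subgraph expectation threshold of the cycle C_n on n vertices (viewed as a subgraph of K_n) satisfies c/n ≤ p̃_E(C_n) ≤ C/n. -/

import Mathlib

open Finset

attribute [local instance] Classical.propDecidable

/-- The edge set of the complete graph `K_n` on vertex set `Fin n`. -/
def Kn (n : ℕ) : Finset (Sym2 (Fin n)) :=
  Finset.univ.filter (fun e => ¬ e.IsDiag)

/-- Two edge sets on `Fin n` are isomorphic (as edge-induced graphs) if some
permutation of the vertices maps one edge set onto the other. -/
def IsCopy (n : ℕ) (A B : Finset (Sym2 (Fin n))) : Prop :=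
  ∃ σ : Equiv.Perm (Fin n), A.image (Sym2.map σ) = B

/-- `copyCount n H' H` is `M_{H',H}`, the number of edge-induced subgraphs of `H`
that are isomorphic copies of `H'`. -/
noncomputable def copyCount (n : ℕ) (H' H : Finset (Sym2 (Fin n))) : ℕ :=
  (H.powerset.filter (fun S => IsCopy n H' S)).card

/-- The number of copies of `H` in `K_n` whose edge set contains `J0`. -/
noncomputable def copyCountContaining (n : ℕ) (H J0 : Finset (Sym2 (Fin n))) : ℕ :=
  ((Kn n).powerset.filter (fun S => IsCopy n H S ∧ J0 ⊆ S)).card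

/-- The probability that `G(n,p)` equals the graph with edge set `G ⊆ K_n`. -/
noncomputable def erWeight (n : ℕ) (p : ℝ) (G : Finset (Sym2 (Fin n))) : ℝ :=
  p ^ G.card * (1 - p) ^ ((Kn n).card - G.card)

/-- `P_p(E)`: the probability that `G(n,p)` satisfies the event `E`. -/
noncomputable def erProb (n : ℕ) (p : ℝ) (E : Finset (Sym2 (Fin n)) → Prop) : ℝ :=
  ∑ G ∈ (Kn n).powerset, if E G then erWeight n p G else 0

/-- `E_p f`: the expectation of `f` under `G(n,p)`. -/
noncomputable def erExp (n : ℕ) (p : ℝ) (f : Finset (Sym2 (Fin n)) → ℝ) : ℝ :=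
  ∑ G ∈ (Kn n).powerset, erWeight n p G * f G

/-- The critical threshold `p_c(H)`. -/
noncomputable def pc (n : ℕ) (H : Finset (Sym2 (Fin n))) : ℝ :=
  sInf {p : ℝ | p ∈ Set.Icc (0:ℝ) 1 ∧
    1/2 ≤ erProb n p (fun G => 1 ≤ copyCount n H G)}

/-- The Kahn–Kalai subgraph expectation threshold `p_E(H)`. -/
noncomputable def pE (n : ℕ) (H : Finset (Sym2 (Fin n))) : ℝ :=
  sInf {p : ℝ | p ∈ Set.Icc (0:ℝ) 1 ∧
    ∀ H' ⊆ H, H'.Nonempty →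
      1/2 ≤ erExp n p (fun G => (copyCount n H' G : ℝ))}

/-- The modified subgraph expectation threshold `p̃_E(H)`. -/
noncomputable def ptE (n : ℕ) (H : Finset (Sym2 (Fin n))) : ℝ :=
  sInf {p : ℝ | p ∈ Set.Icc (0:ℝ) 1 ∧
    ∀ H' ⊆ H, H'.Nonempty →
      (copyCount n H' H : ℝ) / 2 ≤ erExp n p (fun G => (copyCount n H' G : ℝ))}

/-- The Hamiltonian cycle on the `n` vertices of `K_n`, as an edge set. -/
def cycleEdges (n : ℕ) : Finset (Sym2 (Fin n)) :=
  Finset.univ.image (fun i => s(i, finRotate n i))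

/-!
Linearity of expectation gives `E_p Z_{H'} = M_{H',K_n} p^{e(H')}`. For `H' = C_n` the constraint
reads `M_{C_n,K_n} p^n ≥ 1/2` with `M_{C_n,K_n} ≤ n!`, forcing `p ≥ 1/(2n)`.

Conversely, by orbit–stabilizer, `M_{H',C_n} / M_{H',K_n}` is the fraction of vertex permutations
mapping `H'` into `C_n`. A proper `H' ⊆ C_n` with `k` edges is a union of `s ≤ k` paths on `k + s`
vertices, and such a permutation is fixed on these vertices by its values at the `s` starting
points and the `k` directions along the cycle taken by the image edges: at most
`2^k n^s (n-k-s)!` permutations (`2^n n` for `H' = C_n`). Since `n^{k+s} (n-k-s)! ≤ 3^{k+s} n!`, the fraction is at most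
`(18/n)^k`, so `p = 18/n` satisfies every constraint.
-/

open Equiv Nat

namespace Nat

theorem pow_self_le_three_pow_mul_factorial (m : ℕ) : m ^ m ≤ 3 ^ m * m ! := by
  have h : ((m : ℝ) ^ m / m !) ≤ 3 ^ m :=
    (Real.pow_div_factorial_le_exp _ m.cast_nonneg m).trans <| by
      rw [← Real.exp_one_pow]
      exact pow_le_pow_left₀ (Real.exp_pos 1).le (Real.exp_one_lt_d9.le.trans (by norm_num)) m
  rw [div_le_iff₀ (by positivity)] at h
  exact_mod_cast h

/-- Termwise, `n (m - i) ≤ m (n - i)` for `i < m ≤ n`. -/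
theorem pow_mul_factorial_le_pow_mul_descFactorial {m n : ℕ} (hmn : m ≤ n) :
    n ^ m * m ! ≤ m ^ m * n.descFactorial m := by
  have hpow (a : ℕ) : a ^ m = ∏ _i ∈ range m, a := by simp
  rw [← descFactorial_self, descFactorial_eq_prod_range, descFactorial_eq_prod_range, hpow n,
    hpow m, ← Finset.prod_mul_distrib, ← Finset.prod_mul_distrib]
  refine Finset.prod_le_prod' fun i _ => ?_
  rw [Nat.mul_sub, Nat.mul_sub, Nat.mul_comm n m]
  exact Nat.sub_le_sub_left (Nat.mul_le_mul_right i hmn) _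

theorem pow_mul_factorial_sub_le {m n : ℕ} (hmn : m ≤ n) : n ^ m * (n - m)! ≤ 3 ^ m * n ! := by
  refine Nat.le_of_mul_le_mul_right ?_ m.factorial_pos
  calc n ^ m * (n - m)! * m ! = n ^ m * m ! * (n - m)! := by ring
    _ ≤ 3 ^ m * m ! * n.descFactorial m * (n - m)! := by
      refine Nat.mul_le_mul_right _ ((pow_mul_factorial_le_pow_mul_descFactorial hmn).trans ?_)
      exact Nat.mul_le_mul_right _ m.pow_self_le_three_pow_mul_factorial
    _ = 3 ^ m * n ! * m ! := by rw [← factorial_mul_descFactorial hmn]; ring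

end Nat

namespace Equiv.Perm

variable {α : Type*} [Fintype α]

theorem card_filter_eqOn_le (σ₀ : Perm α) (V : Finset α) :
    #{σ : Perm α | ∀ x ∈ V, σ x = σ₀ x} ≤ (Fintype.card α - #V)! := by
  have hfix : #{σ : Perm α | ∀ x ∈ V, σ x = σ₀ x} = #{τ : Perm α | ∀ x ∈ V, τ x = x} :=
    card_equiv (Equiv.mulLeft σ₀⁻¹) fun σ => by
      simp only [mem_filter, mem_univ, true_and, coe_mulLeft, Perm.mul_apply, Perm.inv_eq_iff_eq]
  have hperm : {τ : Perm α // ∀ x ∈ V, τ x = x} ≃ Perm {x // x ∉ V} :=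
    (subtypeEquivRight fun τ => by simp only [not_not]).trans
      (Perm.subtypeEquivSubtypePerm fun x => x ∉ V).symm
  rw [hfix, ← Fintype.card_subtype, Fintype.card_congr hperm, Fintype.card_perm,
    Fintype.card_subtype_compl, Fintype.card_coe]

theorem card_le_card_mul_factorial_of_eqOn {β : Type*} [Fintype β] (P : Finset (Perm α))
    (V : Finset α) (f : Perm α → β) (hf : ∀ σ ∈ P, ∀ τ ∈ P, f σ = f τ → ∀ x ∈ V, σ x = τ x) :
    #P ≤ Fintype.card β * (Fintype.card α - #V)! := by
  rw [card_eq_sum_card_fiberwise (t := univ) fun σ _ => mem_univ (f σ), ← Finset.card_univ,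
    ← smul_eq_mul, ← sum_const]
  refine sum_le_sum fun b _ => ?_
  rcases (P.filter (f · = b)).eq_empty_or_nonempty with h | ⟨σ₀, hσ₀⟩
  · simp [h]
  rw [mem_filter] at hσ₀
  refine (card_le_card fun σ hσ => ?_).trans (card_filter_eqOn_le σ₀ V)
  rw [mem_filter] at hσ ⊢
  exact ⟨mem_univ σ, hf σ hσ.1 σ₀ hσ₀.1 (hσ.2.trans hσ₀.2.symm)⟩

end Equiv.Perm

section ErdosRenyi

variable {n : ℕ}

theorem sum_erWeight_superset (p : ℝ) {S : Finset (Sym2 (Fin n))} (hS : S ⊆ Kn n) :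
    ∑ G ∈ (Kn n).powerset with S ⊆ G, erWeight n p G = p ^ #S := by
  have hIcc : {G ∈ (Kn n).powerset | S ⊆ G} = Icc S (Kn n) := by
    ext G; simp [and_comm]
  have hweight : ∀ U ∈ (Kn n \ S).powerset,
      erWeight n p (S ∪ U) = p ^ #S * (p ^ #U * (1 - p) ^ (#(Kn n \ S) - #U)) := by
    intro U hU
    have hdisj : Disjoint S U := disjoint_of_subset_right (mem_powerset.mp hU) disjoint_sdiff
    have hUS := card_le_card (mem_powerset.mp hU)
    rw [card_sdiff_of_subset hS] at hUS ⊢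
    rw [erWeight, card_union_of_disjoint hdisj, pow_add, mul_assoc, Nat.sub_add_eq]
  rw [hIcc, Icc_eq_image_powerset hS, sum_image, sum_congr rfl hweight, ← mul_sum,
    sum_pow_mul_eq_add_pow, add_sub_cancel, one_pow, mul_one]
  intro U hU V hV hUV
  rw [mem_coe, mem_powerset] at hU hV
  simpa only [union_sdiff_cancel_left (disjoint_of_subset_right hU disjoint_sdiff),
    union_sdiff_cancel_left (disjoint_of_subset_right hV disjoint_sdiff)]
    using congrArg (· \ S) hUV

theorem card_eq_of_isCopy {A B : Finset (Sym2 (Fin n))} (h : IsCopy n A B) : #B = #A := by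
  obtain ⟨σ, rfl⟩ := h
  exact card_image_of_injective _ (Sym2.map.injective σ.injective)

theorem erExp_copyCount (p : ℝ) (H' : Finset (Sym2 (Fin n))) :
    erExp n p (fun G => (copyCount n H' G : ℝ)) = copyCount n H' (Kn n) * p ^ #H' := by
  set copies := {S ∈ (Kn n).powerset | IsCopy n H' S}
  have hcount : ∀ G ∈ (Kn n).powerset,
      erWeight n p G * copyCount n H' G = ∑ S ∈ copies, if S ⊆ G then erWeight n p G else 0 := by
    intro G hG
    rw [sum_ite, sum_const_zero, add_zero, sum_const, nsmul_eq_mul, mul_comm, copyCount,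
      filter_filter]
    congr 3
    ext S
    simp only [mem_filter, mem_powerset]
    exact ⟨fun h => ⟨h.1.trans (mem_powerset.mp hG), h.2, h.1⟩, fun h => ⟨h.2.2, h.2.1⟩⟩
  rw [erExp, sum_congr rfl hcount, sum_comm, copyCount, ← nsmul_eq_mul, ← sum_const]
  refine sum_congr rfl fun S hS => ?_
  rw [mem_filter, mem_powerset] at hS
  rw [← sum_filter, sum_erWeight_superset p hS.1, card_eq_of_isCopy hS.2]

end ErdosRenyi

section Copies

variable {n : ℕ}

def placements (n : ℕ) (A X : Finset (Sym2 (Fin n))) : Finset (Perm (Fin n)) :=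
  {σ | A.image (Sym2.map σ) ⊆ X}

theorem image_map_mul (σ τ : Perm (Fin n)) (A : Finset (Sym2 (Fin n))) :
    A.image (Sym2.map ⇑(σ * τ)) = (A.image (Sym2.map τ)).image (Sym2.map σ) := by
  rw [image_image, Perm.coe_mul, Sym2.map_comp]

theorem image_map_one (A : Finset (Sym2 (Fin n))) : A.image (Sym2.map ⇑(1 : Perm (Fin n))) = A := by
  rw [Perm.coe_one, Sym2.map_id, image_id]

theorem card_image_map_eq_of_isCopy {A S : Finset (Sym2 (Fin n))} (h : IsCopy n A S) :
    #{σ : Perm (Fin n) | A.image (Sym2.map σ) = S} =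
      #{σ : Perm (Fin n) | A.image (Sym2.map σ) = A} := by
  obtain ⟨σ₀, rfl⟩ := h
  refine card_equiv (Equiv.mulLeft σ₀⁻¹) fun σ => ?_
  have hinj := image_injective (Sym2.map.injective (σ₀⁻¹ : Perm (Fin n)).injective)
  simp only [mem_filter, mem_univ, true_and, coe_mulLeft]
  rw [← hinj.eq_iff, ← image_map_mul, ← image_map_mul, inv_mul_cancel, image_map_one]

theorem card_placements (A X : Finset (Sym2 (Fin n))) :
    #(placements n A X) = copyCount n A X * #{σ : Perm (Fin n) | A.image (Sym2.map σ) = A} := by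
  have hmaps : ∀ σ ∈ placements n A X, A.image (Sym2.map σ) ∈ {S ∈ X.powerset | IsCopy n A S} :=
    fun σ hσ => mem_filter.mpr ⟨mem_powerset.mpr (mem_filter.mp hσ).2, σ, rfl⟩
  rw [card_eq_sum_card_fiberwise hmaps, copyCount, ← smul_eq_mul, ← sum_const]
  refine sum_congr rfl fun S hS => ?_
  rw [mem_filter, mem_powerset] at hS
  rw [← card_image_map_eq_of_isCopy hS.2, placements, filter_filter]
  congr 1
  ext σ
  simp only [mem_filter, mem_univ, true_and, and_iff_right_iff_imp]
  rintro rfl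
  exact hS.1

theorem image_map_subset_Kn {A : Finset (Sym2 (Fin n))} (hA : A ⊆ Kn n) (σ : Perm (Fin n)) :
    A.image (Sym2.map σ) ⊆ Kn n := by
  intro _ he
  obtain ⟨e, heA, rfl⟩ := mem_image.mp he
  have := hA heA
  simp only [Kn, mem_filter, mem_univ, true_and] at this ⊢
  rwa [Sym2.isDiag_map σ.injective]

/-- Orbit–stabilizer: both copy counts are orbit sizes over the same stabilizer. -/
theorem copyCount_mul_factorial {A : Finset (Sym2 (Fin n))} (hA : A ⊆ Kn n)
    (X : Finset (Sym2 (Fin n))) :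
    copyCount n A X * n ! = #(placements n A X) * copyCount n A (Kn n) := by
  have hKn : #(placements n A (Kn n)) = n ! := by
    rw [placements, filter_true_of_mem fun σ _ => image_map_subset_Kn hA σ, Finset.card_univ,
      Fintype.card_perm, Fintype.card_fin]
  rw [← hKn, card_placements, card_placements]
  ring

theorem copyCount_mono (A : Finset (Sym2 (Fin n))) {X Y : Finset (Sym2 (Fin n))} (h : X ⊆ Y) :
    copyCount n A X ≤ copyCount n A Y :=
  card_le_card (filter_subset_filter _ (powerset_mono.mpr h))

theorem one_le_copyCount_self (A : Finset (Sym2 (Fin n))) : 1 ≤ copyCount n A A :=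
  card_pos.mpr ⟨A, mem_filter.mpr ⟨mem_powerset_self A, 1, image_map_one A⟩⟩

theorem copyCount_le_factorial (A X : Finset (Sym2 (Fin n))) : copyCount n A X ≤ n ! := by
  have hstab : 0 < #{σ : Perm (Fin n) | A.image (Sym2.map σ) = A} :=
    card_pos.mpr ⟨1, mem_filter.mpr ⟨mem_univ 1, image_map_one A⟩⟩
  calc copyCount n A X ≤ copyCount n A X * #{σ : Perm (Fin n) | A.image (Sym2.map σ) = A} :=
        Nat.le_mul_of_pos_right _ hstab
    _ = #(placements n A X) := (card_placements A X).symm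
    _ ≤ n ! := by
      simpa only [Finset.card_univ, Fintype.card_perm, Fintype.card_fin]
        using card_le_univ (placements n A X)

end Copies

section Threshold

variable {n : ℕ} {H : Finset (Sym2 (Fin n))}

theorem copyCount_div_two_le_erExp_one (hH : H ⊆ Kn n) (H' : Finset (Sym2 (Fin n))) :
    (copyCount n H' H : ℝ) / 2 ≤ erExp n 1 (fun G => (copyCount n H' G : ℝ)) := by
  rw [erExp_copyCount, one_pow, mul_one]
  have : (copyCount n H' H : ℝ) ≤ copyCount n H' (Kn n) := mod_cast copyCount_mono H' hH
  linarith [(Nat.cast_nonneg (copyCount n H' H) : (0 : ℝ) ≤ _)]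

theorem ptE_le {p : ℝ} (hp : p ∈ Set.Icc 0 1)
    (h : ∀ H' ⊆ H, H'.Nonempty → (copyCount n H' H : ℝ) / 2 ≤ copyCount n H' (Kn n) * p ^ #H') :
    ptE n H ≤ p :=
  csInf_le ⟨0, fun _ hq => hq.1.1⟩
    ⟨hp, fun H' hH' hne => (erExp_copyCount p H').symm ▸ h H' hH' hne⟩

theorem ptE_le_one (hH : H ⊆ Kn n) : ptE n H ≤ 1 :=
  csInf_le ⟨0, fun _ hq => hq.1.1⟩
    ⟨⟨zero_le_one, le_rfl⟩, fun H' _ _ => copyCount_div_two_le_erExp_one hH H'⟩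

theorem le_ptE (hH : H ⊆ Kn n) (hne : H.Nonempty) {c : ℝ} (hc : n ! * c ^ #H ≤ 1 / 2) :
    c ≤ ptE n H := by
  refine le_csInf ⟨1, ⟨zero_le_one, le_rfl⟩, fun H' _ _ => copyCount_div_two_le_erExp_one hH H'⟩
    fun p ⟨hp, hcopies⟩ => ?_
  by_contra! hpc
  have hself := hcopies H subset_rfl hne
  rw [erExp_copyCount] at hself
  have h1 : (1 : ℝ) ≤ copyCount n H H := mod_cast one_le_copyCount_self H
  have h2 : (copyCount n H (Kn n) : ℝ) ≤ n ! := mod_cast copyCount_le_factorial H (Kn n)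
  have h3 : p ^ #H < c ^ #H := pow_lt_pow_left₀ hpc hp.1 (card_pos.mpr hne).ne'
  nlinarith [pow_nonneg hp.1 #H, (Nat.cast_pos.mpr n.factorial_pos : (0 : ℝ) < n !)]

end Threshold

section CyclicOrder

open Fin.NatCast

variable {n : ℕ} [NeZero n]

/-- Walking backwards from any `j ∈ V` one reaches `R` (every `j ∈ V \ R` has `j - 1 ∈ T`), so two
solutions of the same first-order recurrence along `T` agreeing on `R` agree on `V`. -/
theorem eqOn_of_recurrence {β : Type*} {T R V : Finset (Fin n)} {r : Fin n} (hr : r ∈ R)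
    (hTV : T ⊆ V) (hV : ∀ j ∈ V, j ∉ R → j - 1 ∈ T) (step : Fin n → β → β) {f g : Fin n → β}
    (hf : ∀ i ∈ T, f (i + 1) = step i (f i)) (hg : ∀ i ∈ T, g (i + 1) = step i (g i))
    (hfg : ∀ i ∈ R, f i = g i) : ∀ j ∈ V, f j = g j := by
  suffices h : ∀ l : ℕ, ∀ j ∈ V, j - l = r → f j = g j from
    fun j hj => h (j - r).val j hj (by rw [Fin.cast_val_eq_self, sub_sub_cancel])
  intro l
  induction l with
  | zero =>
    rintro j - rfl
    simpa using hfg _ hr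
  | succ l ih =>
    intro j hj hjr
    by_cases hjR : j ∈ R
    · exact hfg j hjR
    have hj1 := hV j hj hjR
    have hprev := ih (j - 1) (hTV hj1) (by rw [← hjr]; push_cast; abel)
    rw [← sub_add_cancel j 1, hf _ hj1, hg _ hj1, hprev]

def runStarts (T : Finset (Fin n)) : Finset (Fin n) := {i ∈ T | i - 1 ∉ T}

theorem runStarts_nonempty {T : Finset (Fin n)} (hT : T.Nonempty) (hTu : T ≠ univ) :
    (runStarts T).Nonempty := by
  by_contra! h
  obtain ⟨i₀, hi₀⟩ := hT
  have hdown : ∀ i ∈ T, i - 1 ∈ T := fun i hi => by_contra fun h' =>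
    (eq_empty_iff_forall_notMem.mp h) i (mem_filter.mpr ⟨hi, h'⟩)
  have hall : ∀ l : ℕ, i₀ - l ∈ T := by
    intro l
    induction l with
    | zero => simpa using hi₀
    | succ l ih => simpa [sub_sub] using hdown _ ih
  exact hTu (eq_univ_of_forall fun j => by simpa using hall (i₀ - j).val)

theorem card_union_image_add_one (T : Finset (Fin n)) :
    #(T ∪ T.image (· + 1)) = #T + #(runStarts T) := by
  have hstarts : runStarts T = T \ T.image (· + 1) := by
    ext i
    simp only [runStarts, mem_filter, mem_sdiff, mem_image, not_exists, not_and]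
    exact and_congr_right fun _ =>
      ⟨fun h j hj hji => h (by rwa [← hji, add_sub_cancel_right]),
        fun h hi => h _ hi (sub_add_cancel i 1)⟩
  have := card_union_add_card_inter T (T.image (· + 1))
  have := card_sdiff_add_card_inter T (T.image (· + 1))
  have := card_image_of_injective T (add_left_injective (1 : Fin n))
  rw [hstarts]
  omega

theorem sub_one_mem_of_mem_union_image {T : Finset (Fin n)} {j : Fin n}
    (hj : j ∈ T ∪ T.image (· + 1)) (hjS : j ∉ runStarts T) : j - 1 ∈ T := by
  rcases mem_union.mp hj with hjT | hjB
  · by_contra h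
    exact hjS (mem_filter.mpr ⟨hjT, h⟩)
  · obtain ⟨i, hi, rfl⟩ := mem_image.mp hjB
    simpa using hi

end CyclicOrder

section CycleEdges

variable {n : ℕ} [NeZero n]

theorem cycleEdges_eq_image : cycleEdges n = univ.image fun i : Fin n => s(i, i + 1) := by
  simp only [cycleEdges, finRotate_apply]

theorem mem_cycleEdges {x y : Fin n} : s(x, y) ∈ cycleEdges n ↔ y = x + 1 ∨ x = y + 1 := by
  simp only [cycleEdges_eq_image, mem_image, mem_univ, true_and, Sym2.eq_iff]
  constructor
  · rintro ⟨i, ⟨rfl, rfl⟩ | ⟨rfl, rfl⟩⟩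
    · exact Or.inl rfl
    · exact Or.inr rfl
  · rintro (rfl | rfl)
    · exact ⟨x, Or.inl ⟨rfl, rfl⟩⟩
    · exact ⟨y, Or.inr ⟨rfl, rfl⟩⟩

theorem cycleEdge_injective (hn : 2 < n) : Function.Injective fun i : Fin n => s(i, i + 1) := by
  intro a b hab
  rcases Sym2.eq_iff.mp hab with ⟨h, -⟩ | ⟨rfl, h⟩
  · exact h
  · obtain ⟨m, rfl⟩ : ∃ m, n = m + 3 := ⟨n - 3, by omega⟩
    rw [add_assoc, add_eq_left] at h
    exact absurd (congrArg Fin.val h)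
      (by simp [Fin.val_add, Nat.mod_eq_of_lt (by omega : 2 < m + 3)])

theorem cycleEdges_subset_Kn (hn : 1 < n) : cycleEdges n ⊆ Kn n := by
  rw [cycleEdges_eq_image]
  intro e he
  obtain ⟨i, -, rfl⟩ := mem_image.mp he
  obtain ⟨m, rfl⟩ : ∃ m, n = m + 2 := ⟨n - 2, by omega⟩
  simp [Kn]

theorem card_cycleEdges (hn : 2 < n) : #(cycleEdges n) = n := by
  rw [cycleEdges_eq_image, card_image_of_injective _ (cycleEdge_injective hn), Finset.card_univ,
    Fintype.card_fin]

theorem image_cycleEdge_filter {A : Finset (Sym2 (Fin n))} (hA : A ⊆ cycleEdges n) :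
    ({i | s(i, i + 1) ∈ A} : Finset (Fin n)).image (fun i => s(i, i + 1)) = A := by
  ext e
  simp only [mem_image, mem_filter, mem_univ, true_and]
  refine ⟨fun ⟨i, hi, he⟩ => he ▸ hi, fun he => ?_⟩
  have := hA he
  rw [cycleEdges_eq_image] at this
  obtain ⟨i, -, rfl⟩ := mem_image.mp this
  exact ⟨i, he, rfl⟩

theorem apply_add_one_of_mem_placements {T : Finset (Fin n)} {σ : Perm (Fin n)}
    (hσ : σ ∈ placements n (T.image fun i => s(i, i + 1)) (cycleEdges n)) {i : Fin n}
    (hi : i ∈ T) : σ (i + 1) = if σ (i + 1) = σ i + 1 then σ i + 1 else σ i - 1 := by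
  have h := (mem_filter.mp hσ).2 (mem_image_of_mem _ (mem_image_of_mem _ hi))
  rw [Sym2.map_mk, mem_cycleEdges] at h
  split_ifs with hup
  · exact hup
  · exact eq_sub_of_add_eq (h.resolve_left hup).symm

/-- A placement of the edges `{i, i+1}`, `i ∈ T`, into the cycle is fixed on `V` by the directions
it sends these edges to and by its values on `R`; it is arbitrary off `V`. -/
theorem card_placements_le {T R V : Finset (Fin n)} (hR : R.Nonempty) (hTV : T ⊆ V)
    (hV : ∀ j ∈ V, j ∉ R → j - 1 ∈ T) :
    #(placements n (T.image fun i => s(i, i + 1)) (cycleEdges n)) ≤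
      2 ^ #T * n ^ #R * (n - #V)! := by
  have h := Perm.card_le_card_mul_factorial_of_eqOn
    (placements n (T.image fun i => s(i, i + 1)) (cycleEdges n)) V
    (fun σ => (fun i : T => decide (σ (i + 1) = σ i + 1), fun i : R => σ i)) ?_
  · simpa only [Fintype.card_prod, Fintype.card_fun, Fintype.card_bool, Fintype.card_coe,
      Fintype.card_fin] using h
  intro σ hσ τ hτ hστ
  simp only [Prod.mk.injEq] at hστ
  obtain ⟨r, hr⟩ := hR
  refine eqOn_of_recurrence hr hTV hV (fun i x => if σ (i + 1) = σ i + 1 then x + 1 else x - 1)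
    (fun i hi => apply_add_one_of_mem_placements hσ hi) (fun i hi => ?_)
    (fun i hi => congrFun hστ.2 ⟨i, hi⟩)
  have hdir : σ (i + 1) = σ i + 1 ↔ τ (i + 1) = τ i + 1 := by
    simpa using congrFun hστ.1 ⟨i, hi⟩
  simp only [hdir]
  exact apply_add_one_of_mem_placements hτ hi

theorem card_placements_cycleEdges_le :
    #(placements n (cycleEdges n) (cycleEdges n)) ≤ 2 ^ n * n := by
  have h := card_placements_le (T := univ) (R := ({0} : Finset (Fin n))) (V := univ)
    (singleton_nonempty 0) subset_rfl fun j _ _ => mem_univ _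
  rwa [← cycleEdges_eq_image, Finset.card_univ, Fintype.card_fin, card_singleton, pow_one,
    Nat.sub_self, factorial_zero, mul_one] at h

theorem card_placements_mul_pow_le_of_ne_univ {T : Finset (Fin n)} (hT : T.Nonempty)
    (hTu : T ≠ univ) :
    #(placements n (T.image fun i => s(i, i + 1)) (cycleEdges n)) * n ^ #T ≤ 18 ^ #T * n ! := by
  have hcount := card_placements_le (runStarts_nonempty hT hTu) subset_union_left
    fun j hj hjS => sub_one_mem_of_mem_union_image hj hjS
  rw [card_union_image_add_one] at hcount
  have hsk : #(runStarts T) ≤ #T := card_le_card (filter_subset _ T)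
  have hkn : #T + #(runStarts T) ≤ n := by
    have := card_le_univ (T ∪ T.image (· + 1))
    rwa [card_union_image_add_one, Fintype.card_fin] at this
  calc #(placements n (T.image fun i => s(i, i + 1)) (cycleEdges n)) * n ^ #T
      ≤ 2 ^ #T * n ^ #(runStarts T) * (n - (#T + #(runStarts T)))! * n ^ #T :=
        Nat.mul_le_mul_right _ hcount
    _ = 2 ^ #T * (n ^ (#T + #(runStarts T)) * (n - (#T + #(runStarts T)))!) := by ring
    _ ≤ 2 ^ #T * (3 ^ (#T + #(runStarts T)) * n !) :=
        Nat.mul_le_mul_left _ (pow_mul_factorial_sub_le hkn)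
    _ ≤ 2 ^ #T * (3 ^ (2 * #T) * n !) := by gcongr <;> omega
    _ = 18 ^ #T * n ! := by rw [pow_mul, ← mul_assoc, ← mul_pow]; norm_num

theorem card_placements_mul_pow_le (hn : 2 < n) {A : Finset (Sym2 (Fin n))}
    (hA : A ⊆ cycleEdges n) (hne : A.Nonempty) :
    #(placements n A (cycleEdges n)) * n ^ #A ≤ 18 ^ #A * n ! := by
  set T : Finset (Fin n) := {i | s(i, i + 1) ∈ A}
  have hTA : T.image (fun i => s(i, i + 1)) = A := image_cycleEdge_filter hA
  have hcard : #A = #T := hTA ▸ card_image_of_injective T (cycleEdge_injective hn)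
  by_cases hTu : T = univ
  · rw [← hTA, hTu, ← cycleEdges_eq_image, card_cycleEdges hn]
    calc #(placements n (cycleEdges n) (cycleEdges n)) * n ^ n ≤ 2 ^ n * n * (3 ^ n * n !) :=
          Nat.mul_le_mul card_placements_cycleEdges_le (pow_self_le_three_pow_mul_factorial n)
      _ ≤ 2 ^ n * 2 ^ n * (3 ^ n * n !) := by gcongr; exact Nat.lt_two_pow_self.le
      _ = 12 ^ n * n ! := by rw [← mul_assoc, ← mul_pow, ← mul_pow]; norm_num
      _ ≤ 18 ^ n * n ! := by gcongr; norm_num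
  · have hTne : T.Nonempty := by
      rw [← hTA] at hne
      exact hne.of_image
    rw [hcard, ← hTA]
    exact card_placements_mul_pow_le_of_ne_univ hTne hTu

end CycleEdges

theorem copyCount_cycleEdges_mul_pow_le {n : ℕ} (hn : 2 < n) {A : Finset (Sym2 (Fin n))}
    (hA : A ⊆ cycleEdges n) (hne : A.Nonempty) :
    copyCount n A (cycleEdges n) * n ^ #A ≤ 18 ^ #A * copyCount n A (Kn n) := by
  have : NeZero n := ⟨by omega⟩
  refine Nat.le_of_mul_le_mul_right ?_ n.factorial_pos
  calc copyCount n A (cycleEdges n) * n ^ #A * n !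
      = #(placements n A (cycleEdges n)) * n ^ #A * copyCount n A (Kn n) := by
        rw [mul_right_comm, copyCount_mul_factorial (hA.trans (cycleEdges_subset_Kn (by omega))),
          mul_right_comm]
    _ ≤ 18 ^ #A * n ! * copyCount n A (Kn n) :=
        Nat.mul_le_mul_right _ (card_placements_mul_pow_le hn hA hne)
    _ = 18 ^ #A * copyCount n A (Kn n) * n ! := by ring

theorem ptE_cycleEdges_le {n : ℕ} (hn : 2 < n) : ptE n (cycleEdges n) ≤ 18 / n := by
  have : NeZero n := ⟨by omega⟩
  have hn0 : (0 : ℝ) < n := by positivity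
  rcases le_or_gt (18 / n : ℝ) 1 with hle | hgt
  · refine ptE_le ⟨by positivity, hle⟩ fun A hA hne => ?_
    have h : (copyCount n A (cycleEdges n) * n ^ #A : ℝ) ≤ 18 ^ #A * copyCount n A (Kn n) :=
      mod_cast copyCount_cycleEdges_mul_pow_le hn hA hne
    rw [div_pow, mul_div_assoc', le_div_iff₀ (by positivity)]
    nlinarith [pow_pos hn0 #A, (Nat.cast_nonneg _ : (0 : ℝ) ≤ copyCount n A (cycleEdges n))]
  · exact (ptE_le_one (cycleEdges_subset_Kn (by omega))).trans hgt.le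

theorem le_ptE_cycleEdges {n : ℕ} (hn : 2 < n) : 1 / (2 * n) ≤ ptE n (cycleEdges n) := by
  have : NeZero n := ⟨by omega⟩
  have hne : (cycleEdges n).Nonempty := card_pos.mp (by rw [card_cycleEdges hn]; omega)
  refine le_ptE (cycleEdges_subset_Kn (by omega)) hne ?_
  have hfac : (n ! : ℝ) ≤ (n : ℝ) ^ n := mod_cast n.factorial_le_pow
  have h2 : (1 : ℝ) / 2 ^ n ≤ 1 / 2 :=
    one_div_le_one_div_of_le two_pos (le_self_pow₀ one_le_two (by omega))
  rw [card_cycleEdges hn, div_pow, one_pow, mul_pow]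
  calc (n ! : ℝ) * (1 / (2 ^ n * n ^ n)) ≤ n ^ n * (1 / (2 ^ n * n ^ n)) := by gcongr
    _ = 1 / 2 ^ n := by field_simp
    _ ≤ 1 / 2 := h2

/-- For the Hamiltonian cycle `C_n` on the `n` vertices of `K_n` (`n ≥ 3`), the
modified subgraph expectation threshold satisfies `p̃_E(C_n) ≍ 1/n`. -/
theorem ptE_cycle :
    ∃ c C : ℝ, 0 < c ∧ 0 < C ∧ ∀ n : ℕ, 3 ≤ n →
      c / n ≤ ptE n (cycleEdges n) ∧ ptE n (cycleEdges n) ≤ C / n :=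
  ⟨1 / 2, 18, by norm_num, by norm_num, fun n hn =>
    ⟨by rw [div_div]; exact le_ptE_cycleEdges hn, ptE_cycleEdges_le hn⟩⟩
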